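/- arXiv:2301.02162 — 2 statements merged into one kernel-verified Lean document; each statement's English description precedes it below -/
import Mathlib

section
/- Let (X_i)_{i≥1} be i.i.d. random vectors in ℝ^d with law μ_T supported in a compact set, let Φ : ℝ^d → ℝ^p be bounded measurable, and let v : ℝ^k × ℝ^d → ℝ, (θ, x) ↦ v_θ(x), be measurable, bounded, and differentiable in θ with uniformly bounded partial derivative ∂_θ v_θ(x). Let (N_n) be sample sizes with n/N_n bounded, and let θ̂_n be random vectors such that θ̂_n → θ̄ in probability and √n(θ̂_n − θ̄) is bounded in probability. Assume E_T[v_θ̄(X)] ≠ 0. Define ĉ_n = (N_n⁻¹ Σ_{i≤N_n} Φ(X_i) v_{θ̂_n}(X_i)) / (N_n⁻¹ Σ_{i≤N_n} v_{θ̂_n}(X_i)) and c = E_T[Φ(X) v_θ̄(X)] / E_T[v_θ̄(X)]. Then √n(ĉ_n − c) is bounded in probability; equivalently, Ψ̂_n − Ψ = O_p(n^{−1/2}), where Ψ̂_n(x) = Φ(x) − ĉ_n and Ψ(x) = Φ(x) − c. -/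
/-!
Write `ĉ_n = S_n⁻¹ • A_n` with `S_n`, `A_n` the empirical means of `v_θ̂(X)` and `v_θ̂(X) Φ(X)`.
At the fixed parameter `θ̄`, Chebyshev's inequality gives `√N_n`-rates for both empirical
means, hence `√n`-rates since `n / N_n` is bounded. The derivative bound makes `v` Lipschitz in
`θ`, so replacing `θ̄` by `θ̂_n` costs at most a constant times `‖θ̂_n - θ̄‖ = O_p(n^{-1/2})`.
Finally `(S, A) ↦ S⁻¹ • A` is locally Lipschitz near `(s, a)` when `s ≠ 0`, and `S_n` lies in
such a neighbourhood with probability tending to one.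
-/

open MeasureTheory ProbabilityTheory Filter
open scoped Matrix

def BoundedInProb {Ω E : Type*} [MeasurableSpace Ω] [Norm E]
    (P : Measure Ω) (Z : ℕ → Ω → E) : Prop :=
  ∀ ε : ℝ, 0 < ε → ∃ M : ℝ, 0 < M ∧
    ∀ᶠ n in atTop, (P {ω | M < ‖Z n ω‖}).toReal < ε

theorem norm_inv_smul_sub_inv_smul_le {E : Type*} [SeminormedAddCommGroup E] [NormedSpace ℝ E]
    {S s : ℝ} (A a : E) (hs : s ≠ 0) (hS : |S - s| ≤ |s| / 2) :
    ‖S⁻¹ • A - s⁻¹ • a‖ ≤ 2 / |s| * (‖A - a‖ + |S - s| * ‖a‖ / |s|) := by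
  have hs' : 0 < |s| := abs_pos.2 hs
  have hS_half : |s| / 2 ≤ |S| := by
    have := abs_sub_abs_le_abs_sub s S
    rw [abs_sub_comm] at this
    linarith
  have hS0 : S ≠ 0 := abs_pos.1 (by linarith)
  have hsplit : S⁻¹ • A - s⁻¹ • a = S⁻¹ • ((A - a) + ((s - S) / s) • a) := by
    have : S⁻¹ * ((s - S) / s) = S⁻¹ - s⁻¹ := by field_simp
    rw [smul_add, smul_smul, this]
    module
  rw [hsplit, norm_smul, norm_inv, Real.norm_eq_abs]
  gcongr
  · rw [inv_le_comm₀ (by linarith) (by positivity)]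
    simpa [inv_div] using hS_half
  · refine (norm_add_le _ _).trans ?_
    rw [norm_smul, Real.norm_eq_abs, abs_div, abs_sub_comm, div_mul_eq_mul_div]

namespace BoundedInProb

variable {Ω E F G : Type*} [MeasurableSpace Ω] {P : Measure Ω} [IsFiniteMeasure P]

theorem of_bound₂ [Norm E] [Norm F] [Norm G] {Y : ℕ → Ω → E} {W : ℕ → Ω → F}
    {Z : ℕ → Ω → G} (hY : BoundedInProb P Y) (hW : BoundedInProb P W)
    (h : ∀ M₁ M₂ : ℝ, ∃ M : ℝ,
      ∀ᶠ n in atTop, ∀ ω, ‖Y n ω‖ ≤ M₁ → ‖W n ω‖ ≤ M₂ → ‖Z n ω‖ ≤ M) :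
    BoundedInProb P Z := by
  intro ε hε
  obtain ⟨M₁, -, hM₁⟩ := hY (ε / 2) (by positivity)
  obtain ⟨M₂, -, hM₂⟩ := hW (ε / 2) (by positivity)
  obtain ⟨M, hM⟩ := h M₁ M₂
  refine ⟨max M 1, by positivity, ?_⟩
  filter_upwards [hM₁, hM₂, hM] with n h₁ h₂ hn
  have hsub : {ω | max M 1 < ‖Z n ω‖} ⊆ {ω | M₁ < ‖Y n ω‖} ∪ {ω | M₂ < ‖W n ω‖} := by
    intro ω hω
    by_contra hω'
    simp only [Set.mem_union, Set.mem_ofPred_eq, not_or, not_lt] at hω hω'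
    exact (hn ω hω'.1 hω'.2).not_gt ((le_max_left _ _).trans_lt hω)
  rw [← measureReal_def] at h₁ h₂ ⊢
  calc P.real {ω | max M 1 < ‖Z n ω‖}
      ≤ P.real {ω | M₁ < ‖Y n ω‖} + P.real {ω | M₂ < ‖W n ω‖} :=
        (measureReal_mono hsub).trans (measureReal_union_le _ _)
    _ < ε := by linarith

theorem of_bound [Norm E] [Norm F] {Y : ℕ → Ω → E} {Z : ℕ → Ω → F}
    (hY : BoundedInProb P Y)
    (h : ∀ M₁ : ℝ, ∃ M : ℝ, ∀ᶠ n in atTop, ∀ ω, ‖Y n ω‖ ≤ M₁ → ‖Z n ω‖ ≤ M) :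
    BoundedInProb P Z :=
  hY.of_bound₂ hY fun M₁ _ => (h M₁).imp fun _ hM => hM.mono fun _ hn ω h₁ _ => hn ω h₁

theorem of_norm_le_mul [SeminormedAddGroup E] [Norm F] {Y : ℕ → Ω → E} {Z : ℕ → Ω → F} {C : ℝ}
    (hY : BoundedInProb P Y) (h : ∀ n ω, ‖Z n ω‖ ≤ C * ‖Y n ω‖) : BoundedInProb P Z :=
  hY.of_bound fun M₁ => ⟨|C| * M₁, .of_forall fun n ω h₁ =>
    (h n ω).trans <| (mul_le_mul_of_nonneg_right (le_abs_self C) (norm_nonneg _)).trans <|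
      mul_le_mul_of_nonneg_left h₁ (abs_nonneg C)⟩

theorem add [SeminormedAddGroup E] {Y W : ℕ → Ω → E} (hY : BoundedInProb P Y)
    (hW : BoundedInProb P W) : BoundedInProb P fun n ω => Y n ω + W n ω :=
  hY.of_bound₂ hW fun M₁ M₂ => ⟨M₁ + M₂, .of_forall fun _ _ h₁ h₂ =>
    (norm_add_le _ _).trans (add_le_add h₁ h₂)⟩

theorem pi {ι : Type*} [Fintype ι] {E : ι → Type*} [∀ i, SeminormedAddGroup (E i)]
    {Z : ℕ → Ω → (i : ι) → E i} (h : ∀ i, BoundedInProb P fun n ω => Z n ω i) :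
    BoundedInProb P Z := by
  intro ε hε
  have hε' : 0 < ε / (Fintype.card ι + 1) := by positivity
  choose M hM hev using fun i => h i _ hε'
  have hM_le : ∀ i, M i ≤ ∑ j, M j := fun i =>
    Finset.single_le_sum (fun j _ => (hM j).le) (Finset.mem_univ i)
  have hM_sum : 0 ≤ ∑ j, M j := Finset.sum_nonneg fun j _ => (hM j).le
  refine ⟨∑ i, M i + 1, by linarith, ?_⟩
  filter_upwards [eventually_all.2 hev] with n hn
  have hsub : {ω | ∑ i, M i + 1 < ‖Z n ω‖} ⊆ ⋃ i, {ω | M i < ‖Z n ω i‖} := by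
    intro ω hω
    by_contra hω'
    simp only [Set.mem_iUnion, Set.mem_ofPred_eq, not_exists, not_lt] at hω hω'
    exact hω.not_ge <| (pi_norm_le_iff_of_nonneg (by linarith)).2 fun i =>
      (hω' i).trans ((hM_le i).trans (le_add_of_nonneg_right zero_le_one))
  simp only [← measureReal_def] at hn ⊢
  calc P.real {ω | ∑ i, M i + 1 < ‖Z n ω‖}
      ≤ ∑ i, P.real {ω | M i < ‖Z n ω i‖} :=
        (measureReal_mono hsub).trans (measureReal_iUnion_fintype_le _)
    _ ≤ ∑ _i : ι, ε / (Fintype.card ι + 1) := Finset.sum_le_sum fun i _ => (hn i).le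
    _ < ε := by
      rw [Finset.sum_const, Finset.card_univ, nsmul_eq_mul, mul_div_assoc',
        div_lt_iff₀ (by positivity)]
      nlinarith

/-- The delta method for the map `(S, A) ↦ S⁻¹ • A` at a point with `s ≠ 0`. -/
theorem inv_smul_sub [SeminormedAddCommGroup E] [NormedSpace ℝ E] {r : ℕ → ℝ}
    (hr : Tendsto r atTop atTop) {S : ℕ → Ω → ℝ} {A : ℕ → Ω → E} {s : ℝ} {a : E} (hs : s ≠ 0)
    (hS : BoundedInProb P fun n ω => r n • (S n ω - s))
    (hA : BoundedInProb P fun n ω => r n • (A n ω - a)) :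
    BoundedInProb P fun n ω => r n • ((S n ω)⁻¹ • A n ω - s⁻¹ • a) := by
  have hs' : 0 < |s| := abs_pos.2 hs
  refine hS.of_bound₂ hA fun M₁ M₂ => ⟨2 / |s| * (M₂ + M₁ * ‖a‖ / |s|), ?_⟩
  filter_upwards [hr.eventually_gt_atTop 0, hr.eventually_ge_atTop (2 * M₁ / |s|)]
    with n hpos hlarge ω h₁ h₂
  rw [norm_smul, Real.norm_eq_abs, abs_of_pos hpos] at h₁ h₂ ⊢
  rw [Real.norm_eq_abs] at h₁
  have hclose : |S n ω - s| ≤ |s| / 2 := by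
    rw [div_le_iff₀ hs'] at hlarge
    nlinarith
  calc r n * ‖(S n ω)⁻¹ • A n ω - s⁻¹ • a‖
      ≤ r n * (2 / |s| * (‖A n ω - a‖ + |S n ω - s| * ‖a‖ / |s|)) := by
        gcongr
        exact norm_inv_smul_sub_inv_smul_le _ _ hs hclose
    _ = 2 / |s| * (r n * ‖A n ω - a‖ + r n * |S n ω - s| * ‖a‖ / |s|) := by ring
    _ ≤ 2 / |s| * (M₂ + M₁ * ‖a‖ / |s|) := by gcongr

end BoundedInProb

noncomputable def empiricalMean {E : Type*} [AddCommGroup E] [Module ℝ E] (N : ℕ) (f : ℕ → E) :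
    E :=
  (N : ℝ)⁻¹ • ∑ j ∈ Finset.range N, f j

theorem empiricalMean_apply {ι : Type*} (N : ℕ) (f : ℕ → ι → ℝ) (i : ι) :
    empiricalMean N f i = empiricalMean N (f · i) := by
  simp [empiricalMean, Finset.sum_apply]

theorem norm_empiricalMean_sub_le {E : Type*} [SeminormedAddCommGroup E] [NormedSpace ℝ E]
    {N : ℕ} {f g : ℕ → E} {C : ℝ} (h : ∀ j, ‖f j - g j‖ ≤ C) :
    ‖empiricalMean N f - empiricalMean N g‖ ≤ C := by
  rcases N.eq_zero_or_pos with rfl | hN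
  · simpa [empiricalMean] using (norm_nonneg _).trans (h 0)
  rw [empiricalMean, empiricalMean, ← smul_sub, ← Finset.sum_sub_distrib, norm_smul,
    norm_inv, RCLike.norm_natCast, inv_mul_le_iff₀ (by exact_mod_cast hN)]
  simpa using norm_sum_le_of_le (Finset.range N) fun j _ => h j

theorem BoundedInProb.empiricalMean_of_lipschitz {Ω α Θ E : Type*} [MeasurableSpace Ω]
    {P : Measure Ω} [IsFiniteMeasure P] [SeminormedAddCommGroup Θ] [NormedSpace ℝ Θ]
    [SeminormedAddCommGroup E] [NormedSpace ℝ E] {F : Θ → α → E} {L : ℝ}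
    (hF : ∀ θ₁ θ₂ x, ‖F θ₁ x - F θ₂ x‖ ≤ L * ‖θ₁ - θ₂‖) {r : ℕ → ℝ} (hr : ∀ n, 0 ≤ r n)
    {N : ℕ → ℕ} {X : ℕ → Ω → α} {θhat : ℕ → Ω → Θ} {θbar : Θ} {m : E}
    (hθ : BoundedInProb P fun n ω => r n • (θhat n ω - θbar))
    (hmean : BoundedInProb P fun n ω => r n • (empiricalMean (N n) (fun j => F θbar (X j ω)) - m)) :
    BoundedInProb P fun n ω =>
      r n • (empiricalMean (N n) (fun j => F (θhat n ω) (X j ω)) - m) := by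
  have hplug : BoundedInProb P fun n ω =>
      r n • (empiricalMean (N n) (fun j => F (θhat n ω) (X j ω))
        - empiricalMean (N n) (fun j => F θbar (X j ω))) := by
    refine hθ.of_norm_le_mul (C := L) fun n ω => ?_
    rw [norm_smul, norm_smul, Real.norm_eq_abs, abs_of_nonneg (hr n), mul_left_comm]
    exact mul_le_mul_of_nonneg_left (norm_empiricalMean_sub_le fun j => hF _ _ _) (hr n)
  simpa only [smul_sub, sub_add_sub_cancel] using hplug.add hmean

section EmpiricalMean

variable {Ω : Type*} [MeasurableSpace Ω] {P : Measure Ω} [IsProbabilityMeasure P]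

theorem measureReal_le_abs_empiricalMean_sub_le {Y : ℕ → Ω → ℝ} {B m t : ℝ} {N : ℕ}
    (hYm : ∀ j, Measurable (Y j)) (hY : iIndepFun Y P) (hB : ∀ j ω, |Y j ω| ≤ B)
    (hmean : ∀ j, P[Y j] = m) (hN : 0 < N) (ht : 0 < t) :
    P.real {ω | t ≤ |empiricalMean N (Y · ω) - m|} ≤ B ^ 2 / (N * t ^ 2) := by
  have hN' : (0 : ℝ) < N := by exact_mod_cast hN
  set Z : Ω → ℝ := fun ω => empiricalMean N (Y · ω)
  have hZ : Z = (N : ℝ)⁻¹ • ∑ j ∈ Finset.range N, Y j := by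
    ext ω
    simp [Z, empiricalMean, Finset.sum_apply]
  have hY2 : ∀ j, MemLp (Y j) 2 P := fun j =>
    MemLp.of_bound (hYm j).aestronglyMeasurable B (ae_of_all _ (hB j))
  have hZ2 : MemLp Z 2 P := hZ ▸ (memLp_finsetSum' _ fun j _ => hY2 j).const_smul _
  have hZmean : P[Z] = m := by
    simp only [Z, empiricalMean, smul_eq_mul]
    rw [integral_const_mul, integral_finsetSum _ fun j _ => (hY2 j).integrable one_le_two]
    simp [hmean, hN'.ne']
  have hvarY : ∀ j, Var[Y j; P] ≤ B ^ 2 := fun j => by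
    simpa using variance_le_sq_of_bounded (a := -B) (b := B)
      (ae_of_all _ fun ω => abs_le.1 (hB j ω)) (hYm j).aemeasurable
  have hvarZ : Var[Z; P] ≤ B ^ 2 / N := by
    rw [hZ, variance_smul, IndepFun.variance_sum (fun j _ => hY2 j)
      fun i _ j _ hij => hY.indepFun hij]
    calc (N : ℝ)⁻¹ ^ 2 * ∑ j ∈ Finset.range N, Var[Y j; P]
        ≤ (N : ℝ)⁻¹ ^ 2 * ∑ _j ∈ Finset.range N, B ^ 2 := by
          gcongr with j
          exact hvarY j
      _ = B ^ 2 / N := by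
          simp only [Finset.sum_const, Finset.card_range, nsmul_eq_mul]
          field_simp
  calc P.real {ω | t ≤ |Z ω - m|}
      ≤ Var[Z; P] / t ^ 2 := by
        rw [measureReal_def, ← hZmean]
        exact ENNReal.toReal_le_of_le_ofReal
          (div_nonneg (variance_nonneg _ _) (sq_nonneg _)) (meas_ge_le_variance_div_sq hZ2 ht)
    _ ≤ B ^ 2 / N / t ^ 2 := by gcongr
    _ = B ^ 2 / (N * t ^ 2) := by rw [div_div]

theorem boundedInProb_sqrt_smul_empiricalMean_sub {Y : ℕ → Ω → ℝ} {B m C : ℝ}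
    {N : ℕ → ℕ} (hYm : ∀ j, Measurable (Y j)) (hY : iIndepFun Y P) (hB : ∀ j ω, |Y j ω| ≤ B)
    (hmean : ∀ j, P[Y j] = m) (hN : ∀ n : ℕ, (n : ℝ) ≤ C * N n) :
    BoundedInProb P fun n ω => √(n : ℝ) • (empiricalMean (N n) (Y · ω) - m) := by
  intro ε hε
  have hdecay : Tendsto (fun M : ℝ => B ^ 2 * C / M ^ 2) atTop (nhds 0) :=
    tendsto_const_nhds.div_atTop (tendsto_pow_atTop two_ne_zero)
  obtain ⟨M, hMε, hM⟩ := ((hdecay.eventually (gt_mem_nhds hε)).and (eventually_gt_atTop 0)).exists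
  refine ⟨M, hM, ?_⟩
  filter_upwards [eventually_gt_atTop 0] with n hn
  have hn' : (0 : ℝ) < n := by exact_mod_cast hn
  have hNn : 0 < N n := Nat.pos_of_ne_zero fun h => by simpa [h] using (hn'.trans_le (hN n))
  have hNn' : (0 : ℝ) < N n := by exact_mod_cast hNn
  have hsqrt : 0 < √(n : ℝ) := Real.sqrt_pos.2 hn'
  have hsub : {ω | M < ‖√(n : ℝ) • (empiricalMean (N n) (Y · ω) - m)‖}
      ⊆ {ω | M / √(n : ℝ) ≤ |empiricalMean (N n) (Y · ω) - m|} := by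
    intro ω hω
    simp only [Set.mem_ofPred_eq, norm_smul, Real.norm_eq_abs, abs_of_pos hsqrt] at hω ⊢
    rw [div_le_iff₀ hsqrt, mul_comm]
    exact hω.le
  rw [← measureReal_def]
  calc P.real {ω | M < ‖√(n : ℝ) • (empiricalMean (N n) (Y · ω) - m)‖}
      ≤ B ^ 2 / (N n * (M / √(n : ℝ)) ^ 2) :=
        (measureReal_mono hsub).trans
          (measureReal_le_abs_empiricalMean_sub_le hYm hY hB hmean hNn (by positivity))
    _ = B ^ 2 * n / (N n * M ^ 2) := by
        rw [div_pow, Real.sq_sqrt hn'.le]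
        field_simp
    _ ≤ B ^ 2 * (C * N n) / (N n * M ^ 2) := by gcongr; exact hN n
    _ = B ^ 2 * C / M ^ 2 := by field_simp
    _ < ε := hMε

variable {α : Type*} [MeasurableSpace α] {μ : Measure α} {X : ℕ → Ω → α} {C : ℝ} {N : ℕ → ℕ}

theorem boundedInProb_sqrt_smul_empiricalMean_comp_sub_integral (hXm : ∀ i, Measurable (X i))
    (hX : iIndepFun X P) (hX_law : ∀ i, P.map (X i) = μ) {g : α → ℝ} (hg : Measurable g)
    {B : ℝ} (hB : ∀ x, |g x| ≤ B) (hN : ∀ n : ℕ, (n : ℝ) ≤ C * N n) :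
    BoundedInProb P fun n ω =>
      √(n : ℝ) • (empiricalMean (N n) (fun j => g (X j ω)) - ∫ x, g x ∂μ) := by
  refine boundedInProb_sqrt_smul_empiricalMean_sub (Y := fun j => g ∘ X j)
    (fun j => hg.comp (hXm j)) (hX.comp _ fun _ => hg) (fun j ω => hB _) (fun j => ?_) hN
  rw [← hX_law j, integral_map (hXm j).aemeasurable hg.aestronglyMeasurable]
  rfl

theorem boundedInProb_sqrt_smul_empiricalMean_comp_sub_integral_pi {ι : Type*} [Fintype ι]
    (hXm : ∀ i, Measurable (X i)) (hX : iIndepFun X P) (hX_law : ∀ i, P.map (X i) = μ)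
    [IsFiniteMeasure μ] {g : α → ι → ℝ} (hg : Measurable g) {B : ℝ} (hB : ∀ x, ‖g x‖ ≤ B)
    (hN : ∀ n : ℕ, (n : ℝ) ≤ C * N n) :
    BoundedInProb P fun n ω =>
      √(n : ℝ) • (empiricalMean (N n) (fun j => g (X j ω)) - ∫ x, g x ∂μ) := by
  refine BoundedInProb.pi fun i => ?_
  have hgi : Measurable (g · i) := (measurable_pi_apply i).comp hg
  have hg_int : ∀ l, Integrable (g · l) μ := fun l =>
    .of_bound ((measurable_pi_apply l).comp hg).aestronglyMeasurable B
      (ae_of_all _ fun x => (norm_le_pi_norm (g x) l).trans (hB x))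
  simpa only [Pi.smul_apply, Pi.sub_apply, empiricalMean_apply, eval_integral hg_int] using
    boundedInProb_sqrt_smul_empiricalMean_comp_sub_integral hXm hX hX_law hgi
      (fun x => (norm_le_pi_norm (g x) i).trans (hB x)) hN

end EmpiricalMean

theorem calibration_constant_root_n_rate_general
    (d p k : ℕ) (Ω : Type) [MeasurableSpace Ω] (P : Measure Ω) [IsProbabilityMeasure P]
    (μT : Measure (Fin d → ℝ)) [IsProbabilityMeasure μT]
    (X : ℕ → Ω → (Fin d → ℝ)) (hXm : ∀ i, Measurable (X i))
    (hX_iid : iIndepFun X P)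
    (hX_law : ∀ i, P.map (X i) = μT)
    (Φ : (Fin d → ℝ) → (Fin p → ℝ)) (hΦm : Measurable Φ)
    (hΦbd : ∃ C : ℝ, ∀ x, ‖Φ x‖ ≤ C)
    (v : (Fin k → ℝ) → (Fin d → ℝ) → ℝ)
    (hvm : Measurable (fun q : (Fin k → ℝ) × (Fin d → ℝ) => v q.1 q.2))
    (hvbd : ∃ C : ℝ, ∀ θ x, |v θ x| ≤ C)
    (hvdiff : ∀ x, Differentiable ℝ (fun θ => v θ x))
    (hvderiv_bd : ∃ C : ℝ, ∀ θ x, ‖fderiv ℝ (fun θ' => v θ' x) θ‖ ≤ C)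
    (Nn : ℕ → ℕ)
    (hNbd : ∃ C : ℝ, ∀ n : ℕ, (n : ℝ) ≤ C * (Nn n : ℝ))
    (θhat : ℕ → Ω → (Fin k → ℝ))
    (θbar : Fin k → ℝ)
    (hθ_rate : BoundedInProb P (fun n ω => Real.sqrt n • (θhat n ω - θbar)))
    (hv_ne : ∫ x, v θbar x ∂μT ≠ 0)
    (chat : ℕ → Ω → (Fin p → ℝ))
    (hchat : chat = fun n ω =>
      (((Nn n : ℝ))⁻¹ * ∑ j ∈ Finset.range (Nn n), v (θhat n ω) (X j ω))⁻¹ •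
        (((Nn n : ℝ))⁻¹ • ∑ j ∈ Finset.range (Nn n), v (θhat n ω) (X j ω) • Φ (X j ω)))
    (c : Fin p → ℝ)
    (hc : c = (∫ x, v θbar x ∂μT)⁻¹ • (∫ x, v θbar x • Φ x ∂μT)) :
    BoundedInProb P (fun n ω => Real.sqrt n • (chat n ω - c)) := by
  obtain ⟨Cφ, hCφ⟩ := hΦbd
  obtain ⟨Cv, hCv⟩ := hvbd
  obtain ⟨Cd, hCd⟩ := hvderiv_bd
  obtain ⟨CN, hCN⟩ := hNbd
  have hvθm : Measurable (v θbar) := hvm.comp (measurable_const.prodMk measurable_id)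
  have hv_lip : ∀ θ₁ θ₂ x, ‖v θ₁ x - v θ₂ x‖ ≤ Cd * ‖θ₁ - θ₂‖ := fun θ₁ θ₂ x =>
    convex_univ.norm_image_sub_le_of_norm_fderiv_le (fun θ _ => (hvdiff x).differentiableAt)
      (fun θ _ => hCd θ x) trivial trivial
  have hvΦ_lip : ∀ θ₁ θ₂ x, ‖v θ₁ x • Φ x - v θ₂ x • Φ x‖ ≤ Cd * Cφ * ‖θ₁ - θ₂‖ :=
    fun θ₁ θ₂ x => by
      rw [← sub_smul, norm_smul, mul_right_comm]
      exact mul_le_mul (hv_lip θ₁ θ₂ x) (hCφ x) (norm_nonneg _)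
        ((norm_nonneg _).trans (hv_lip θ₁ θ₂ x))
  have hvΦ_bd : ∀ x, ‖v θbar x • Φ x‖ ≤ Cv * Cφ := fun x => by
    rw [norm_smul, Real.norm_eq_abs]
    exact mul_le_mul (hCv θbar x) (hCφ x) (norm_nonneg _) ((abs_nonneg _).trans (hCv θbar x))
  have hsqrt : ∀ n : ℕ, 0 ≤ √(n : ℝ) := fun n => Real.sqrt_nonneg n
  have hS := hθ_rate.empiricalMean_of_lipschitz (F := v) hv_lip hsqrt
    (boundedInProb_sqrt_smul_empiricalMean_comp_sub_integral hXm hX_iid hX_law hvθm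
      (hCv θbar) hCN)
  have hA_fixed := boundedInProb_sqrt_smul_empiricalMean_comp_sub_integral_pi (N := Nn)
    hXm hX_iid hX_law (hvθm.smul hΦm) hvΦ_bd hCN
  have hA := hθ_rate.empiricalMean_of_lipschitz (F := fun θ x => v θ x • Φ x) hvΦ_lip hsqrt
    hA_fixed
  subst hchat hc
  exact hS.inv_smul_sub (Real.tendsto_sqrt_atTop.comp tendsto_natCast_atTop_atTop) hv_ne hA

/-- **Lemma B2: `√n`-rate of the estimated calibration constant.**
If `(X_i)` are i.i.d. `~ μT` with compact support, `Φ` is bounded measurable, `v_θ(x)` is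
measurable, bounded, differentiable in `θ` with uniformly bounded derivative, `n/N_n` is
bounded, `θ̂_n → θ̄` in probability with `√n(θ̂_n − θ̄) = O_p(1)`, and `E_T[v_θ̄(X)] ≠ 0`,
then `√n(ĉ_n − c) = O_p(1)`, i.e. `Ψ̂_n − Ψ = O_p(n^{−1/2})`. -/
theorem calibration_constant_root_n_rate
    (d p k : ℕ) (Ω : Type) [MeasurableSpace Ω] (P : Measure Ω) [IsProbabilityMeasure P]
    (μT : Measure (Fin d → ℝ)) [IsProbabilityMeasure μT]
    (K : Set (Fin d → ℝ)) (hK : IsCompact K) (hμTK : μT Kᶜ = 0)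
    (X : ℕ → Ω → (Fin d → ℝ)) (hXm : ∀ i, Measurable (X i))
    (hX_iid : iIndepFun X P)
    (hX_law : ∀ i, P.map (X i) = μT)
    (Φ : (Fin d → ℝ) → (Fin p → ℝ)) (hΦm : Measurable Φ)
    (hΦbd : ∃ C : ℝ, ∀ x, ‖Φ x‖ ≤ C)
    (v : (Fin k → ℝ) → (Fin d → ℝ) → ℝ)
    (hvm : Measurable (fun q : (Fin k → ℝ) × (Fin d → ℝ) => v q.1 q.2))
    (hvbd : ∃ C : ℝ, ∀ θ x, |v θ x| ≤ C)
    (hvdiff : ∀ x, Differentiable ℝ (fun θ => v θ x))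
    (hvderiv_bd : ∃ C : ℝ, ∀ θ x, ‖fderiv ℝ (fun θ' => v θ' x) θ‖ ≤ C)
    (Nn : ℕ → ℕ) (hNpos : ∀ n, 0 < Nn n)
    (hNbd : ∃ C : ℝ, ∀ n : ℕ, (n : ℝ) ≤ C * (Nn n : ℝ))
    (θhat : ℕ → Ω → (Fin k → ℝ)) (hθm : ∀ n, Measurable (θhat n))
    (θbar : Fin k → ℝ)
    (hθ_consistent : TendstoInMeasure P θhat atTop (fun _ => θbar))
    (hθ_rate : BoundedInProb P (fun n ω => Real.sqrt n • (θhat n ω - θbar)))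
    (hv_ne : ∫ x, v θbar x ∂μT ≠ 0)
    (chat : ℕ → Ω → (Fin p → ℝ))
    (hchat : chat = fun n ω =>
      (((Nn n : ℝ))⁻¹ * ∑ j ∈ Finset.range (Nn n), v (θhat n ω) (X j ω))⁻¹ •
        (((Nn n : ℝ))⁻¹ • ∑ j ∈ Finset.range (Nn n), v (θhat n ω) (X j ω) • Φ (X j ω)))
    (c : Fin p → ℝ)
    (hc : c = (∫ x, v θbar x ∂μT)⁻¹ • (∫ x, v θbar x • Φ x ∂μT)) :
    BoundedInProb P (fun n ω => Real.sqrt n • (chat n ω - c)) :=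
  calibration_constant_root_n_rate_general d p k Ω P μT X hXm hX_iid hX_law Φ hΦm hΦbd v hvm hvbd
    hvdiff hvderiv_bd Nn hNbd θhat θbar hθ_rate hv_ne chat hchat c hc
end

section
/- Suppose the propensity score model is correct: μ_T = μ_S.withDensity(r̄) with r̄(x) = exp(xᵀγ̄), and suppose the augmentation covariate Ψ is calibrated so that E_T[Ψ(X) v_θ̄(X)] = 0. Let H̄ = E_S[XXᵀ ġ(Xᵀᾱ)] be invertible and L = −H̄⁻¹(E_S[X ġ(Xᵀᾱ) r̄(X)] − E_T[X ġ(Xᵀᾱ)]). Let Σ = E_S[ΨΨᵀ v_θ̄(X)] be positive definite, a = E_S[ΨXᵀ ġ(Xᵀᾱ)] with aᵀΣ⁻¹a invertible, and b = E_S[Ψ r̄(X) v_θ̄(X)] + E_S[ΨXᵀ v_θ̄(X)]L. Then L = 0, b = 0, and consequently the population RWLS minimizer β̄ = Σ⁻¹a(aᵀΣ⁻¹a)⁻¹aᵀΣ⁻¹b − Σ⁻¹b equals 0. -/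
open MeasureTheory Matrix
open scoped Matrix

/-- **Under a correct PS model the population RWLS minimizer vanishes (Lemma B4, population part).**
Suppose `μT = μS.withDensity r̄` with `r̄(x) = exp(xᵀγ̄)`, and the augmentation covariate `Ψ`
is calibrated so that `E_T[Ψ(X) v(X)] = 0`.  With `H̄ = E_S[XXᵀ ġ(Xᵀᾱ)]` invertible,
`L = −H̄⁻¹(E_S[X ġ(Xᵀᾱ) r̄(X)] − E_T[X ġ(Xᵀᾱ)])`, `Sg = E_S[ΨΨᵀ v]` positive definite,
`a = E_S[ΨXᵀ ġ(Xᵀᾱ)]` with `aᵀSg⁻¹a` invertible, and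
`b = E_S[Ψ r̄ v] + E_S[ΨXᵀ v]·L`, one has `L = 0`, `b = 0`, and hence
`β̄ = Sg⁻¹a(aᵀSg⁻¹a)⁻¹aᵀSg⁻¹b − Sg⁻¹b = 0`. -/
theorem correct_ps_population_beta_zero
    (d p : ℕ) (μS μT : Measure (Fin d → ℝ))
    [IsProbabilityMeasure μS] [IsProbabilityMeasure μT]
    (KS KT : Set (Fin d → ℝ)) (hKS : IsCompact KS) (hKT : IsCompact KT)
    (hμSK : μS KSᶜ = 0) (hμTK : μT KTᶜ = 0)
    (γbar αbar : Fin d → ℝ) (dg : ℝ → ℝ) (hdg : Continuous dg)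
    (Ψ : (Fin d → ℝ) → (Fin p → ℝ)) (v : (Fin d → ℝ) → ℝ)
    (hΨ : Measurable Ψ) (hv : Measurable v)
    (hΨbd : ∃ C : ℝ, ∀ x, ‖Ψ x‖ ≤ C) (hvbd : ∃ C : ℝ, ∀ x, |v x| ≤ C)
    (rbar : (Fin d → ℝ) → ℝ) (hrbar : rbar = fun x => Real.exp (x ⬝ᵥ γbar))
    (h_int : Integrable rbar μS)
    (hPS : μT = μS.withDensity (fun x => ENNReal.ofReal (rbar x)))
    -- calibration: `E_T[Ψ(X) v(X)] = 0`
    (hcal : ∫ x, v x • Ψ x ∂μT = 0)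
    (Hbar : Matrix (Fin d) (Fin d) ℝ)
    (hHbar : Hbar = Matrix.of (fun i j => ∫ x, x i * x j * dg (x ⬝ᵥ αbar) ∂μS))
    (hHunit : IsUnit Hbar.det)
    (L : Fin d → ℝ)
    (hL : L = -(Hbar⁻¹ *ᵥ (∫ x, (dg (x ⬝ᵥ αbar) * rbar x) • x ∂μS
        - ∫ x, dg (x ⬝ᵥ αbar) • x ∂μT)))
    (Sg : Matrix (Fin p) (Fin p) ℝ)
    (hSg : Sg = Matrix.of (fun i j => ∫ x, Ψ x i * Ψ x j * v x ∂μS))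
    (hSgPD : Sg.PosDef)
    (a : Matrix (Fin p) (Fin d) ℝ)
    (ha : a = Matrix.of (fun i j => ∫ x, Ψ x i * x j * dg (x ⬝ᵥ αbar) ∂μS))
    (haunit : IsUnit (aᵀ * Sg⁻¹ * a).det)
    (b : Fin p → ℝ)
    (hb : b = (∫ x, (rbar x * v x) • Ψ x ∂μS)
        + (Matrix.of (fun i j => ∫ x, Ψ x i * x j * v x ∂μS)) *ᵥ L)
    (βbar : Fin p → ℝ)
    (hβbar : βbar = Sg⁻¹ *ᵥ (a *ᵥ ((aᵀ * Sg⁻¹ * a)⁻¹ *ᵥ (aᵀ *ᵥ (Sg⁻¹ *ᵥ b))))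
        - Sg⁻¹ *ᵥ b) :
    L = 0 ∧ b = 0 ∧ βbar = 0 := by
  have hrm : Measurable rbar := by
    subst hrbar
    exact Real.continuous_exp.measurable.comp
      (Finset.measurable_sum _ fun i _ => (measurable_pi_apply i).mul measurable_const)
  have hrpos : ∀ x, 0 ≤ rbar x := by
    subst hrbar; intro x; exact (Real.exp_pos _).le
  have key : ∀ {E : Type} [NormedAddCommGroup E] [NormedSpace ℝ E]
      (g : (Fin d → ℝ) → E), ∫ x, g x ∂μT = ∫ x, rbar x • g x ∂μS := by
    intro E _ _ g
    rw [hPS]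
    have hf : Measurable fun x => (rbar x).toNNReal :=
      measurable_real_toNNReal.comp hrm
    have : (fun x => ENNReal.ofReal (rbar x))
        = fun x => ((rbar x).toNNReal : ENNReal) := rfl
    rw [this, integral_withDensity_eq_integral_smul hf]
    refine integral_congr_ae (Filter.Eventually.of_forall fun x => ?_)
    simp [NNReal.smul_def, Real.coe_toNNReal _ (hrpos x)]
  have hLz : L = 0 := by
    rw [hL, key (fun x => dg (x ⬝ᵥ αbar) • x)]
    have : (∫ x, rbar x • (dg (x ⬝ᵥ αbar) • x) ∂μS)
        = ∫ x, (dg (x ⬝ᵥ αbar) * rbar x) • x ∂μS := by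
      refine integral_congr_ae (Filter.Eventually.of_forall fun x => ?_)
      simp [smul_smul, mul_comm]
    rw [this, sub_self, Matrix.mulVec_zero, neg_zero]
  have hbz : b = 0 := by
    rw [hb, hLz, Matrix.mulVec_zero, add_zero]
    have := key (fun x => v x • Ψ x)
    rw [hcal] at this
    have h2 : (∫ x, rbar x • (v x • Ψ x) ∂μS)
        = ∫ x, (rbar x * v x) • Ψ x ∂μS := by
      refine integral_congr_ae (Filter.Eventually.of_forall fun x => ?_)
      simp [smul_smul]
    rw [← h2, ← this]
  refine ⟨hLz, hbz, ?_⟩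
  rw [hβbar, hbz]
  simp [Matrix.mulVec_zero]
end
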